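/- Let X be a regular Type I space with canonical sequence ⟨X_α⟩. Then each cl(X_α) is normal, X is Tychonoff, and there exists a continuous slicer s : X → L≥0, i.e. a continuous map with s(cl(X_{α+1}) \ X_α) ⊆ [α, α+1] for all α < ω₁. -/

import Mathlib

open Set Topology

noncomputable section

universe u

/-- The ordinal ω₁. -/
def omega1 : Ordinal.{0} := (Cardinal.aleph 1).ord

theorem omega1_pos : (0 : Ordinal.{0}) < omega1 := by
  have := Cardinal.ord_lt_ord.mpr (Cardinal.aleph_pos 1)
  simpa [omega1, Cardinal.ord_zero] using this

theorem omega1_isLimit : Order.IsSuccLimit omega1 :=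
  Cardinal.isSuccLimit_ord (Cardinal.aleph0_le_aleph 1)

/-- ω₁ as a type (the set of countable ordinals). -/
def W : Type 1 := {a : Ordinal.{0} // a < omega1}

instance : LinearOrder W := by unfold W; infer_instance
instance : TopologicalSpace W := Preorder.topology W
instance : OrderTopology W := ⟨rfl⟩

def w0 : W := ⟨0, omega1_pos⟩
def Wsucc (a : W) : W := ⟨Order.succ a.1, omega1_isLimit.succ_lt a.2⟩

/-- The closed long ray: ω₁ × [0,1) with the lexicographic order topology. -/
def LongRay : Type 1 := W ×ₗ ↥(Set.Ico (0:ℝ) 1)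

instance : LinearOrder LongRay := by unfold LongRay; infer_instance
instance : TopologicalSpace LongRay := Preorder.topology LongRay
instance : OrderTopology LongRay := ⟨rfl⟩

/-- Embedding of ω₁ into the long ray as the points (α, 0). -/
def iW (a : W) : LongRay := toLex (a, ⟨0, le_rfl, one_pos⟩)
def lrZero : LongRay := iW w0

/-- A subset of ω₁ is unbounded. -/
def WUnbounded (S : Set W) : Prop := ∀ a : W, ∃ b ∈ S, a < b
/-- A subset of ω₁ is closed (in the order sense). -/
def WClosed (S : Set W) : Prop :=
  ∀ a : W, (∃ b, b < a) → (∀ b, b < a → ∃ c ∈ S, b < c ∧ c < a) → a ∈ S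
def WClub (S : Set W) : Prop := WClosed S ∧ WUnbounded S
def WStationary (A : Set W) : Prop := ∀ C : Set W, WClub C → (A ∩ C).Nonempty

/-- A Type I space structure on `X`. -/
structure TypeI (X : Type u) [TopologicalSpace X] where
  seq : W → Set X
  isOpen : ∀ a, IsOpen (seq a)
  lindelof : ∀ a, IsLindelof (closure (seq a))
  mono : ∀ a b : W, a < b → closure (seq a) ⊆ seq b
  covers : ∀ x : X, ∃ a, x ∈ seq a

variable {X : Type u} [TopologicalSpace X]

/-- A subset is bounded if contained in some `X_α`. -/
def TypeI.Bdd (hT : TypeI X) (A : Set X) : Prop := ∃ a, A ⊆ hT.seq a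
/-- Club: closed and unbounded. -/
def TypeI.Club (hT : TypeI X) (A : Set X) : Prop := IsClosed A ∧ ¬ hT.Bdd A
/-- A predirection: an unbounded set such that any function unbounded on it is
unbounded on every unbounded subset of it. -/
def TypeI.Predirection (hT : TypeI X) (D : Set X) : Prop :=
  ¬ hT.Bdd D ∧ ∀ f : X → LongRay, Continuous f → ¬ BddAbove (f '' D) →
    ∀ A ⊆ D, ¬ hT.Bdd A → ¬ BddAbove (f '' A)
/-- A direction: a closed predirection. -/
def TypeI.IsDirection (hT : TypeI X) (D : Set X) : Prop := IsClosed D ∧ hT.Predirection D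
/-- The bones. -/
def TypeI.bone (hT : TypeI X) (a : W) : Set X := closure (hT.seq a) \ hT.seq a
/-- The sequence is canonical. -/
def TypeI.Canonical (hT : TypeI X) : Prop :=
  ∀ a : W, Order.IsSuccLimit a.1 → hT.seq a = ⋃ b ∈ {b : W | b < a}, hT.seq b
/-- A slicer. -/
def TypeI.Slicer (hT : TypeI X) (s : X → LongRay) : Prop :=
  Continuous s ∧ ∀ a : W, ∀ x ∈ closure (hT.seq (Wsucc a)) \ hT.seq a,
    s x ∈ Set.Icc (iW a) (iW (Wsucc a))

/-- ω-bounded: closures of countable sets are compact. -/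
def OmegaBounded (X : Type u) [TopologicalSpace X] : Prop :=
  ∀ S : Set X, S.Countable → IsCompact (closure S)
/-- ω₁-compact: no uncountable closed discrete subset. -/
def Omega1Compact (X : Type u) [TopologicalSpace X] : Prop :=
  ∀ C : Set X, IsClosed C → DiscreteTopology C → C.Countable
/-- Countably tight. -/
def CountablyTight (X : Type u) [TopologicalSpace X] : Prop :=
  ∀ (A : Set X) (x : X), x ∈ closure A → ∃ B ⊆ A, B.Countable ∧ x ∈ closure B
/-! ### Auxiliary material for the proof -/

section SlicerAux

lemma W.lt_iff' {a b : W} : a < b ↔ a.1 < b.1 := Iff.rfl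
lemma W.le_iff' {a b : W} : a ≤ b ↔ a.1 ≤ b.1 := Iff.rfl
lemma W.ext' {a b : W} (h : a.1 = b.1) : a = b := Subtype.ext h
lemma w0_le (a : W) : w0 ≤ a := (zero_le : (0:Ordinal) ≤ a.1)
lemma lt_Wsucc (a : W) : a < Wsucc a := Order.lt_succ_of_not_isMax (not_isMax a.1)
lemma Wsucc_le_iff {a b : W} : Wsucc a ≤ b ↔ a < b :=
  (by exact Order.succ_le_iff : Order.succ a.1 ≤ b.1 ↔ a.1 < b.1)
lemma Wsucc_lt_Wsucc {a b : W} (h : a < b) : Wsucc a < Wsucc b :=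
  (by exact Order.succ_lt_succ_iff.mpr h : Order.succ a.1 < Order.succ b.1)
lemma Wsucc_le_Wsucc_iff {a b : W} : Wsucc a ≤ Wsucc b ↔ a ≤ b :=
  (by exact Order.succ_le_succ_iff : Order.succ a.1 ≤ Order.succ b.1 ↔ a.1 ≤ b.1)

lemma W.wf : WellFounded ((· < ·) : W → W → Prop) := by
  unfold W
  exact (inferInstance : WellFoundedLT {a : Ordinal.{0} // a < omega1}).wf

lemma lr_lt_iff (p q : W × ↥(Set.Ico (0:ℝ) 1)) :
    (toLex p : LongRay) < toLex q ↔ p.1 < q.1 ∨ (p.1 = q.1 ∧ p.2 < q.2) := Prod.Lex.lt_iff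
lemma lr_le_iff (p q : W × ↥(Set.Ico (0:ℝ) 1)) :
    (toLex p : LongRay) ≤ toLex q ↔ p.1 < q.1 ∨ (p.1 = q.1 ∧ p.2 ≤ q.2) := Prod.Lex.le_iff

lemma iW_le_iW {a b : W} (h : a ≤ b) : iW a ≤ iW b := by
  rcases h.lt_or_eq with h | rfl
  · exact (lr_le_iff _ _).mpr (Or.inl h)
  · exact le_rfl
lemma iW_lt_iW {a b : W} (h : a < b) : iW a < iW b := (lr_lt_iff _ _).mpr (Or.inl h)

lemma le_iW_iff {a : W} {z : LongRay} : z ≤ iW a ↔ (ofLex z).1 < a ∨ (ofLex z).1 = a ∧ (ofLex z).2 = ⟨0, le_rfl, one_pos⟩ := by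
  constructor
  · intro h
    rcases (lr_le_iff (ofLex z) _).mp h with h | ⟨h1, h2⟩
    · exact Or.inl h
    · exact Or.inr ⟨h1, le_antisymm h2 (ofLex z).2.2.1⟩
  · rintro (h | ⟨h1, h2⟩)
    · exact (lr_le_iff (ofLex z) _).mpr (Or.inl h)
    · exact (lr_le_iff (ofLex z) _).mpr (Or.inr ⟨h1, h2.le⟩)

lemma lrZero_le (z : LongRay) : lrZero ≤ z := by
  rcases (w0_le (ofLex z).1).lt_or_eq with h | h
  · exact (lr_le_iff _ (ofLex z)).mpr (Or.inl h)
  · exact (lr_le_iff _ (ofLex z)).mpr (Or.inr ⟨h, (ofLex z).2.2.1⟩)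

/-- The point at position `γ + t` on the long ray, for `t ∈ [0,1]`. -/
noncomputable def lrPoint (γ : W) (t : ℝ) : LongRay :=
  if h : 0 ≤ t ∧ t < 1 then toLex (γ, ⟨t, h⟩) else iW (Wsucc γ)

lemma lrPoint_of_lt (γ : W) {t : ℝ} (h0 : 0 ≤ t) (h1 : t < 1) :
    lrPoint γ t = toLex (γ, ⟨t, h0, h1⟩) := dif_pos ⟨h0, h1⟩
lemma lrPoint_of_one (γ : W) : lrPoint γ 1 = iW (Wsucc γ) := by
  simp [lrPoint]
lemma lrPoint_zero (γ : W) : lrPoint γ 0 = iW γ := by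
  rw [lrPoint_of_lt γ le_rfl one_pos]; rfl
lemma iW_le_lrPoint (γ : W) {t : ℝ} (h0 : 0 ≤ t) : iW γ ≤ lrPoint γ t := by
  by_cases h1 : t < 1
  · rw [lrPoint_of_lt γ h0 h1]
    exact (lr_le_iff _ _).mpr (Or.inr ⟨rfl, h0⟩)
  · rw [show lrPoint γ t = iW (Wsucc γ) from dif_neg (fun hc => h1 hc.2)]
    exact iW_le_iW (lt_Wsucc γ).le
lemma lrPoint_le_succ (γ : W) (t : ℝ) : lrPoint γ t ≤ iW (Wsucc γ) := by
  by_cases h : 0 ≤ t ∧ t < 1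
  · rw [lrPoint_of_lt γ h.1 h.2]
    exact (lr_le_iff _ _).mpr (Or.inl (lt_Wsucc γ))
  · rw [show lrPoint γ t = iW (Wsucc γ) from dif_neg h]

variable {X : Type u} [TopologicalSpace X]

/-- The least index `a` with `x ∈ X_a`. -/
noncomputable def TypeI.Ax (hT : TypeI X) (x : X) : W :=
  WellFounded.min W.wf {a : W | x ∈ hT.seq a} (hT.covers x)

lemma TypeI.mem_Ax (hT : TypeI X) (x : X) : x ∈ hT.seq (hT.Ax x) :=
  WellFounded.min_mem W.wf {a : W | x ∈ hT.seq a} (hT.covers x)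

lemma TypeI.Ax_min (hT : TypeI X) (x : X) {b : W} (hb : b < hT.Ax x) : x ∉ hT.seq b :=
  fun hx => WellFounded.not_lt_min W.wf {a : W | x ∈ hT.seq a} hx hb

lemma TypeI.Ax_le (hT : TypeI X) {x : X} {a : W} (ha : x ∈ hT.seq a) : hT.Ax x ≤ a :=
  le_of_not_gt (fun hc => hT.Ax_min x hc ha)

lemma TypeI.seq_subset_seq (hT : TypeI X) {a b : W} (h : a ≤ b) : hT.seq a ⊆ hT.seq b := by
  rcases h.lt_or_eq with h | rfl
  · exact subset_closure.trans (hT.mono a b h)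
  · exact subset_rfl

lemma TypeI.mem_seq_of_le (hT : TypeI X) {x : X} {a : W} (h : hT.Ax x ≤ a) : x ∈ hT.seq a :=
  hT.seq_subset_seq h (hT.mem_Ax x)

lemma TypeI.Ax_cases (hT : TypeI X) (hcan : hT.Canonical) (x : X) :
    hT.Ax x = w0 ∨ ∃ b : W, hT.Ax x = Wsucc b := by
  rcases Ordinal.zero_or_succ_or_isSuccLimit (hT.Ax x).1 with h | ⟨o, ho⟩ | hlim
  · exact Or.inl (W.ext' h)
  · refine Or.inr ⟨⟨o, ?_⟩, W.ext' ho.symm⟩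
    exact lt_trans (ho ▸ Order.lt_succ_of_not_isMax (not_isMax o)) (hT.Ax x).2
  · exfalso
    have h1 := hcan (hT.Ax x) hlim
    have hx := hT.mem_Ax x
    rw [h1] at hx
    simp only [Set.mem_iUnion, Set.mem_setOf_eq] at hx
    obtain ⟨b, hb, hxb⟩ := hx
    exact hT.Ax_min x hb hxb

end SlicerAux

section SlicerAux2
variable {X : Type u} [TopologicalSpace X] [T2Space X] [RegularSpace X]

omit [T2Space X] in
lemma TypeI.normal_closure (hT : TypeI X) (a : W) : NormalSpace ↥(closure (hT.seq a)) := by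
  have : LindelofSpace ↥(closure (hT.seq a)) := isLindelof_iff_LindelofSpace.mp (hT.lindelof a)
  infer_instance

/-- Urysohn extension: a `[0,1]`-valued function that is `0` on `A ⊆ X_a`, and `1` on `B`
and outside `X_a`. -/
lemma TypeI.urysohn_ext (hT : TypeI X) (a : W) {A B : Set X} (hA : IsClosed A) (hB : IsClosed B)
    (hAs : A ⊆ hT.seq a) (hAB : Disjoint A B) :
    ∃ f : X → ℝ, Continuous f ∧ (∀ x, f x ∈ Set.Icc (0:ℝ) 1) ∧ (∀ x ∈ A, f x = 0) ∧
      (∀ x, x ∉ hT.seq a → f x = 1) ∧ (∀ x ∈ B, f x = 1) := by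
  set K := closure (hT.seq (Wsucc a)) with hKdef
  have hKcl : IsClosed K := isClosed_closure
  have hnorm : NormalSpace ↥K := hT.normal_closure (Wsucc a)
  have hsub : hT.seq a ⊆ K := (hT.seq_subset_seq (lt_Wsucc a).le).trans subset_closure
  set A' : Set ↥K := Subtype.val ⁻¹' A with hA'def
  set B' : Set ↥K := Subtype.val ⁻¹' (B ∪ (hT.seq a)ᶜ) with hB'def
  have hA' : IsClosed A' := hA.preimage continuous_subtype_val
  have hB' : IsClosed B' := (hB.union (hT.isOpen a).isClosed_compl).preimage continuous_subtype_val
  have hd : Disjoint A' B' := by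
    rw [Set.disjoint_left]
    rintro z hzA hzB
    rcases hzB with hzB | hz
    · exact Set.disjoint_left.mp hAB hzA hzB
    · exact hz (hAs hzA)
  obtain ⟨g, hg0, hg1, hg01⟩ := exists_continuous_zero_one_of_isClosed hA' hB' hd
  classical
  refine ⟨fun x => if h : x ∈ K then g ⟨x, h⟩ else 1, ?_, ?_, ?_, ?_, ?_⟩
  · rw [continuous_iff_isClosed]
    intro C hC
    have heq : (fun x => if h : x ∈ K then g ⟨x, h⟩ else 1) ⁻¹' C =
        (Subtype.val '' ((fun z : ↥K => g z) ⁻¹' C)) ∪ {x | x ∉ hT.seq a ∧ (1:ℝ) ∈ C} := by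
      ext x
      simp only [Set.mem_preimage, Set.mem_union, Set.mem_image, Set.mem_setOf_eq]
      constructor
      · intro hx
        by_cases h : x ∈ K
        · rw [dif_pos h] at hx
          exact Or.inl ⟨⟨x, h⟩, hx, rfl⟩
        · rw [dif_neg h] at hx
          exact Or.inr ⟨fun hc => h (hsub hc), hx⟩
      · rintro (⟨z, hz, rfl⟩ | ⟨hxa, h1⟩)
        · rw [dif_pos z.2]
          exact hz
        · by_cases h : x ∈ K
          · rw [dif_pos h]
            rw [hg1 (show (⟨x, h⟩ : ↥K) ∈ B' from Or.inr hxa)]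
            exact h1
          · rw [dif_neg h]; exact h1
    rw [heq]
    refine IsClosed.union (hKcl.isClosedEmbedding_subtypeVal.isClosedMap _ (hC.preimage g.continuous)) ?_
    by_cases h1 : (1:ℝ) ∈ C
    · have : {x | x ∉ hT.seq a ∧ (1:ℝ) ∈ C} = (hT.seq a)ᶜ := by ext x; simp [h1]
      rw [this]; exact (hT.isOpen a).isClosed_compl
    · have : {x | x ∉ hT.seq a ∧ (1:ℝ) ∈ C} = ∅ := by ext x; simp [h1]
      rw [this]; exact isClosed_empty
  · intro x
    by_cases h : x ∈ K
    · simp only [dif_pos h]; exact hg01 _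
    · simp only [dif_neg h]; exact ⟨zero_le_one, le_rfl⟩
  · intro x hx
    have h : x ∈ K := hsub (hAs hx)
    simp only [dif_pos h]
    exact hg0 (show (⟨x, h⟩ : ↥K) ∈ A' from hx)
  · intro x hx
    by_cases h : x ∈ K
    · simp only [dif_pos h]; exact hg1 (Or.inr hx)
    · simp only [dif_neg h]
  · intro x hx
    by_cases h : x ∈ K
    · simp only [dif_pos h]; exact hg1 (Or.inl hx)
    · simp only [dif_neg h]

end SlicerAux2

section SlicerAux3
variable {X : Type u} [TopologicalSpace X]

lemma Wsucc_inj {a b : W} (h : Wsucc a = Wsucc b) : a = b :=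
  le_antisymm (Wsucc_le_Wsucc_iff.mp h.le) (Wsucc_le_Wsucc_iff.mp h.ge)

lemma Wsucc_ne_w0 (a : W) : Wsucc a ≠ w0 :=
  fun h => Ordinal.succ_ne_zero a.1 (congrArg Subtype.val h)

lemma lt_Wsucc_iff {a b : W} : a < Wsucc b ↔ a ≤ b :=
  (by exact Order.lt_succ_iff : a.1 < Order.succ b.1 ↔ a.1 ≤ b.1)

open Classical in
/-- The slicer function built from a family of Urysohn functions. -/
noncomputable def slicerFun (hT : TypeI X) (f : W → X → ℝ) (x : X) : LongRay :=
  if h : ∃ b : W, hT.Ax x = Wsucc b then lrPoint h.choose (f h.choose x) else lrZero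

lemma slicerFun_of_succ (hT : TypeI X) (f : W → X → ℝ) {x : X} {b : W}
    (h : hT.Ax x = Wsucc b) : slicerFun hT f x = lrPoint b (f b x) := by
  have hex : ∃ b' : W, hT.Ax x = Wsucc b' := ⟨b, h⟩
  have hb : hex.choose = b := Wsucc_inj (hex.choose_spec.symm.trans h)
  rw [slicerFun, dif_pos hex, hb]

lemma slicerFun_of_zero (hT : TypeI X) (f : W → X → ℝ) {x : X}
    (h : hT.Ax x = w0) : slicerFun hT f x = lrZero := by
  have hex : ¬ ∃ b' : W, hT.Ax x = Wsucc b' := by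
    rintro ⟨b', hb'⟩
    exact Wsucc_ne_w0 b' (hb'.symm.trans h)
  rw [slicerFun, dif_neg hex]

section Char
variable (hT : TypeI X) (f : W → X → ℝ)
variable (hf01 : ∀ γ x, f γ x ∈ Set.Icc (0:ℝ) 1)
variable (hf0 : ∀ γ (x : X), x ∈ closure (hT.seq γ) → f γ x = 0)
variable (hf1 : ∀ γ (x : X), x ∉ hT.seq (Wsucc γ) → f γ x = 1)

include hf0 in
lemma f_eq_zero {x : X} {γ : W} (h : hT.Ax x ≤ γ) : f γ x = 0 :=
  hf0 γ x (subset_closure (hT.mem_seq_of_le h))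

include hf1 in
lemma f_eq_one {x : X} {γ : W} (h : Wsucc γ < hT.Ax x) : f γ x = 1 :=
  hf1 γ x (hT.Ax_min x h)

include hf0 in
lemma le_of_f_pos {x : X} {γ β : W} (hA : hT.Ax x = Wsucc β) (h : 0 < f γ x) : γ ≤ β := by
  by_contra hc
  push_neg at hc
  rw [f_eq_zero hT f hf0 (hA ▸ Wsucc_le_iff.mpr hc)] at h
  exact lt_irrefl 0 h

include hf01 hf0 hf1 in
lemma lt_slicerFun_iff (hcan : hT.Canonical) (βb : W) (τ : ↥(Set.Ico (0:ℝ) 1)) (x : X) :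
    (toLex (βb, τ) : LongRay) < slicerFun hT f x ↔
      ∃ γ : W, (βb < γ ∧ 0 < f γ x) ∨ (γ = βb ∧ (τ : ℝ) < f γ x) := by
  have ht0 : (0:ℝ) ≤ τ := τ.2.1
  have ht1 : (τ:ℝ) < 1 := τ.2.2
  rcases hT.Ax_cases hcan x with hA | ⟨β, hA⟩
  · rw [slicerFun_of_zero hT f hA]
    have hall : ∀ γ, f γ x = 0 := fun γ => f_eq_zero hT f hf0 (hA ▸ w0_le γ)
    constructor
    · intro hlt
      exact absurd hlt (lrZero_le _).not_gt
    · rintro ⟨γ, ⟨_, h⟩ | ⟨_, h⟩⟩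
      · rw [hall γ] at h; exact absurd h (lt_irrefl 0)
      · rw [hall γ] at h; exact absurd h (not_lt.mpr ht0)
  · rw [slicerFun_of_succ hT f hA]
    have hu0 : 0 ≤ f β x := (hf01 β x).1
    have hu1 : f β x ≤ 1 := (hf01 β x).2
    have hback : ∀ γ : W, ((βb < γ ∧ 0 < f γ x) ∨ (γ = βb ∧ (τ:ℝ) < f γ x)) →
        (toLex (βb, τ) : LongRay) < lrPoint β (f β x) := by
      rintro γ (⟨hγ, hf⟩ | ⟨rfl, hf⟩)
      · have hγβ : γ ≤ β := le_of_f_pos hT f hf0 hA hf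
        have h1 : (toLex (βb, τ) : LongRay) < iW β :=
          (lr_lt_iff _ _).mpr (Or.inl (lt_of_lt_of_le hγ hγβ))
        exact lt_of_lt_of_le h1 (iW_le_lrPoint β hu0)
      · have hfpos : 0 < f γ x := lt_of_le_of_lt ht0 hf
        have hγβ : γ ≤ β := le_of_f_pos hT f hf0 hA hfpos
        rcases hγβ.lt_or_eq with h | rfl
        · have h1 : (toLex (γ, τ) : LongRay) < iW β := (lr_lt_iff _ _).mpr (Or.inl h)
          exact lt_of_lt_of_le h1 (iW_le_lrPoint β hu0)
        · by_cases hu : f γ x < 1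
          · rw [lrPoint_of_lt γ hu0 hu]
            exact (lr_lt_iff _ _).mpr (Or.inr ⟨rfl, Subtype.mk_lt_mk.mpr hf⟩)
          · rw [show lrPoint γ (f γ x) = iW (Wsucc γ) from dif_neg (fun hc => hu hc.2)]
            exact (lr_lt_iff _ _).mpr (Or.inl (lt_Wsucc γ))
    have key : βb < β → ∃ γ : W, (βb < γ ∧ 0 < f γ x) ∨ (γ = βb ∧ (τ:ℝ) < f γ x) := by
      intro hb
      rcases (Wsucc_le_iff.mpr hb).lt_or_eq with h | h
      · refine ⟨Wsucc βb, Or.inl ⟨lt_Wsucc _, ?_⟩⟩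
        rw [f_eq_one hT f hf1 (by rw [hA]; exact Wsucc_lt_Wsucc h)]
        exact one_pos
      · refine ⟨βb, Or.inr ⟨rfl, ?_⟩⟩
        rw [f_eq_one hT f hf1 (by rw [hA, ← h]; exact Wsucc_lt_Wsucc (lt_Wsucc βb))]
        exact ht1
    constructor
    · intro hlt
      by_cases hu : f β x < 1
      · rw [lrPoint_of_lt β hu0 hu] at hlt
        rcases (lr_lt_iff _ _).mp hlt with h | ⟨h1, h2⟩
        · exact key h
        · exact ⟨β, Or.inr ⟨h1.symm, Subtype.mk_lt_mk.mp h2⟩⟩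
      · rw [show lrPoint β (f β x) = iW (Wsucc β) from dif_neg (fun hc => hu hc.2)] at hlt
        rcases (lr_lt_iff _ _).mp hlt with h | ⟨h1, h2⟩
        · rcases (lt_Wsucc_iff.mp h).lt_or_eq with h' | h'
          · exact key h'
          · refine ⟨β, Or.inr ⟨h'.symm, ?_⟩⟩
            rw [le_antisymm hu1 (not_lt.mp hu)]
            exact ht1
        · exact absurd h2 (not_lt.mpr (Subtype.mk_le_mk.mpr ht0))
    · rintro ⟨γ, h⟩
      exact hback γ h

include hf01 hf0 hf1 in
lemma slicerFun_lt_iff (hcan : hT.Canonical) (βb : W) (τ : ↥(Set.Ico (0:ℝ) 1)) (x : X) :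
    slicerFun hT f x < (toLex (βb, τ) : LongRay) ↔
      ∃ γ : W, (γ < βb ∧ f γ x < 1) ∨ (γ = βb ∧ f γ x < (τ : ℝ)) := by
  have ht0 : (0:ℝ) ≤ τ := τ.2.1
  have ht1 : (τ:ℝ) < 1 := τ.2.2
  rcases hT.Ax_cases hcan x with hA | ⟨β, hA⟩
  · rw [slicerFun_of_zero hT f hA]
    have hall : ∀ γ, f γ x = 0 := fun γ => f_eq_zero hT f hf0 (hA ▸ w0_le γ)
    constructor
    · intro hlt
      rcases (lr_lt_iff _ _).mp hlt with h | ⟨h1, h2⟩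
      · exact ⟨w0, Or.inl ⟨h, by rw [hall w0]; exact one_pos⟩⟩
      · exact ⟨βb, Or.inr ⟨rfl, by rw [hall βb]; exact Subtype.mk_lt_mk.mp h2⟩⟩
    · rintro ⟨γ, ⟨hγ, _⟩ | ⟨rfl, hf⟩⟩
      · exact (lr_lt_iff _ _).mpr (Or.inl (lt_of_le_of_lt (w0_le γ) hγ))
      · rcases (w0_le γ).lt_or_eq with h | h
        · exact (lr_lt_iff _ _).mpr (Or.inl h)
        · refine (lr_lt_iff _ _).mpr (Or.inr ⟨h, ?_⟩)
          exact Subtype.mk_lt_mk.mpr (by rw [hall γ] at hf; exact hf)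
  · rw [slicerFun_of_succ hT f hA]
    have hu0 : 0 ≤ f β x := (hf01 β x).1
    have hu1 : f β x ≤ 1 := (hf01 β x).2
    have hAle : ∀ γ : W, f γ x < 1 → β ≤ γ := by
      intro γ hγ
      by_contra hc
      push_neg at hc
      rw [f_eq_one hT f hf1 (by rw [hA]; exact Wsucc_lt_Wsucc hc)] at hγ
      exact lt_irrefl 1 hγ
    constructor
    · intro hlt
      by_cases hu : f β x < 1
      · rw [lrPoint_of_lt β hu0 hu] at hlt
        rcases (lr_lt_iff _ _).mp hlt with h | ⟨h1, h2⟩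
        · exact ⟨β, Or.inl ⟨h, hu⟩⟩
        · exact ⟨β, Or.inr ⟨h1, Subtype.mk_lt_mk.mp h2⟩⟩
      · rw [show lrPoint β (f β x) = iW (Wsucc β) from dif_neg (fun hc => hu hc.2)] at hlt
        have hz : f (Wsucc β) x = 0 := f_eq_zero hT f hf0 (le_of_eq hA)
        rcases (lr_lt_iff _ _).mp hlt with h | ⟨h1, h2⟩
        · exact ⟨Wsucc β, Or.inl ⟨h, by rw [hz]; exact one_pos⟩⟩
        · refine ⟨βb, Or.inr ⟨rfl, ?_⟩⟩
          have h1' : Wsucc β = βb := h1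
          rw [← h1', hz]
          exact Subtype.mk_lt_mk.mp h2
    · rintro ⟨γ, ⟨hγ, hf⟩ | ⟨rfl, hf⟩⟩
      · have hβγ : β ≤ γ := hAle γ hf
        rcases hβγ.lt_or_eq with h | rfl
        · refine lt_of_le_of_lt (lrPoint_le_succ β (f β x)) ?_
          refine lt_of_le_of_lt (iW_le_iW (Wsucc_le_iff.mpr h)) ?_
          exact (lr_lt_iff _ _).mpr (Or.inl hγ)
        · rw [lrPoint_of_lt β hu0 hf]
          exact (lr_lt_iff _ _).mpr (Or.inl hγ)
      · have hfl : f γ x < 1 := lt_of_lt_of_le hf ht1.le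
        have hβγ : β ≤ γ := hAle γ hfl
        rcases hβγ.lt_or_eq with h | rfl
        · refine lt_of_le_of_lt (lrPoint_le_succ β (f β x)) ?_
          refine lt_of_le_of_lt (iW_le_iW (Wsucc_le_iff.mpr h)) ?_
          exact (lr_lt_iff _ _).mpr
            (Or.inr ⟨rfl, Subtype.mk_lt_mk.mpr (lt_of_le_of_lt (hf01 γ x).1 hf)⟩)
        · rw [lrPoint_of_lt β hu0 hfl]
          exact (lr_lt_iff _ _).mpr (Or.inr ⟨rfl, Subtype.mk_lt_mk.mpr hf⟩)

end Char
end SlicerAux3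
section SlicerAux4
variable {X : Type u} [TopologicalSpace X]

section Char2
variable (hT : TypeI X) (f : W → X → ℝ)
variable (hf01 : ∀ γ x, f γ x ∈ Set.Icc (0:ℝ) 1)
variable (hf0 : ∀ γ (x : X), x ∈ closure (hT.seq γ) → f γ x = 0)
variable (hf1 : ∀ γ (x : X), x ∉ hT.seq (Wsucc γ) → f γ x = 1)

include hf01 hf0 hf1 in
lemma slicerFun_continuous (hcan : hT.Canonical) (hfc : ∀ γ, Continuous (f γ)) :
    Continuous (slicerFun hT f) := by
  have H : ∀ S ∈ {s : Set LongRay | ∃ a, s = Set.Ioi a ∨ s = Set.Iio a},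
      IsOpen (slicerFun hT f ⁻¹' S) := by
    rintro S ⟨b, rfl | rfl⟩
    · have heq : slicerFun hT f ⁻¹' (Set.Ioi b) =
          ⋃ γ : W, ({x | (ofLex b).1 < γ ∧ 0 < f γ x} ∪
            {x | γ = (ofLex b).1 ∧ ((ofLex b).2 : ℝ) < f γ x}) := by
        ext x
        simp only [Set.mem_preimage, Set.mem_Ioi, Set.mem_iUnion, Set.mem_union, Set.mem_setOf_eq]
        exact lt_slicerFun_iff hT f hf01 hf0 hf1 hcan (ofLex b).1 (ofLex b).2 x
      rw [heq]
      refine isOpen_iUnion fun γ => IsOpen.union ?_ ?_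
      · by_cases h : (ofLex b).1 < γ
        · have : {x | (ofLex b).1 < γ ∧ 0 < f γ x} = f γ ⁻¹' Set.Ioi 0 := by
            ext x; simp [h]
          rw [this]; exact isOpen_Ioi.preimage (hfc γ)
        · have : {x | (ofLex b).1 < γ ∧ 0 < f γ x} = ∅ := by
            ext x; simp [h]
          rw [this]; exact isOpen_empty
      · by_cases h : γ = (ofLex b).1
        · have : {x | γ = (ofLex b).1 ∧ ((ofLex b).2 : ℝ) < f γ x} =
              f γ ⁻¹' Set.Ioi ((ofLex b).2 : ℝ) := by
            ext x; simp [h]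
          rw [this]; exact isOpen_Ioi.preimage (hfc γ)
        · have : {x | γ = (ofLex b).1 ∧ ((ofLex b).2 : ℝ) < f γ x} = ∅ := by
            ext x; simp [h]
          rw [this]; exact isOpen_empty
    · have heq : slicerFun hT f ⁻¹' (Set.Iio b) =
          ⋃ γ : W, ({x | γ < (ofLex b).1 ∧ f γ x < 1} ∪
            {x | γ = (ofLex b).1 ∧ f γ x < ((ofLex b).2 : ℝ)}) := by
        ext x
        simp only [Set.mem_preimage, Set.mem_Iio, Set.mem_iUnion, Set.mem_union, Set.mem_setOf_eq]
        exact slicerFun_lt_iff hT f hf01 hf0 hf1 hcan (ofLex b).1 (ofLex b).2 x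
      rw [heq]
      refine isOpen_iUnion fun γ => IsOpen.union ?_ ?_
      · by_cases h : γ < (ofLex b).1
        · have : {x | γ < (ofLex b).1 ∧ f γ x < 1} = f γ ⁻¹' Set.Iio 1 := by
            ext x; simp [h]
          rw [this]; exact isOpen_Iio.preimage (hfc γ)
        · have : {x | γ < (ofLex b).1 ∧ f γ x < 1} = ∅ := by
            ext x; simp [h]
          rw [this]; exact isOpen_empty
      · by_cases h : γ = (ofLex b).1
        · have : {x | γ = (ofLex b).1 ∧ f γ x < ((ofLex b).2 : ℝ)} =
              f γ ⁻¹' Set.Iio ((ofLex b).2 : ℝ) := by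
            ext x; simp [h]
          rw [this]; exact isOpen_Iio.preimage (hfc γ)
        · have : {x | γ = (ofLex b).1 ∧ f γ x < ((ofLex b).2 : ℝ)} = ∅ := by
            ext x; simp [h]
          rw [this]; exact isOpen_empty
  exact continuous_generateFrom_iff.mpr H

include hf01 hf0 in
lemma slicerFun_slices (hcan : hT.Canonical) (a : W) (x : X)
    (hx : x ∈ closure (hT.seq (Wsucc a)) \ hT.seq a) :
    slicerFun hT f x ∈ Set.Icc (iW a) (iW (Wsucc a)) := by
  obtain ⟨hx1, hx2⟩ := hx
  have haA : a < hT.Ax x := lt_of_not_ge (fun h => hx2 (hT.mem_seq_of_le h))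
  rcases hT.Ax_cases hcan x with hA | ⟨β, hA⟩
  · exact absurd (hA ▸ haA) (w0_le a).not_gt
  · rw [slicerFun_of_succ hT f hA]
    have haβ : a ≤ β := lt_Wsucc_iff.mp (hA ▸ haA)
    have hu0 : 0 ≤ f β x := (hf01 β x).1
    constructor
    · exact le_trans (iW_le_iW haβ) (iW_le_lrPoint β hu0)
    · have hx3 : x ∈ hT.seq (Wsucc (Wsucc a)) := hT.mono (Wsucc a) _ (lt_Wsucc _) hx1
      have hβa : β ≤ Wsucc a := Wsucc_le_Wsucc_iff.mp (hA ▸ hT.Ax_le hx3)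
      rcases hβa.lt_or_eq with h | rfl
      · exact le_trans (lrPoint_le_succ β (f β x)) (iW_le_iW (Wsucc_le_iff.mpr h))
      · rw [hf0 _ x hx1, lrPoint_zero]

end Char2

lemma typeI_completelyRegular [T2Space X] [RegularSpace X] (hT : TypeI X) :
    CompletelyRegularSpace X := by
  constructor
  intro x K hK hx
  obtain ⟨a, ha⟩ := hT.covers x
  obtain ⟨g, hgc, hg01, hg0, _, hgK⟩ := hT.urysohn_ext a isClosed_singleton hK
    (Set.singleton_subset_iff.mpr ha) (Set.disjoint_singleton_left.mpr hx)
  refine ⟨fun y => ⟨g y, hg01 y⟩, Continuous.subtype_mk hgc _, ?_, ?_⟩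
  · exact Subtype.ext (hg0 x rfl)
  · intro y hy
    exact Subtype.ext (hgK y hy)

end SlicerAux4

/-- A regular Type I space is Tychonoff, the closures of the X_α are normal,
and a slicer exists. -/
theorem stmt_5 {X : Type u} [TopologicalSpace X] [T2Space X] [RegularSpace X]
    (hT : TypeI X) (hcan : hT.Canonical) :
    (∀ a : W, NormalSpace ↥(closure (hT.seq a))) ∧ CompletelyRegularSpace X ∧
      ∃ s : X → LongRay, hT.Slicer s := by
  have hfam : ∀ γ : W, ∃ f : X → ℝ, Continuous f ∧ (∀ x, f x ∈ Set.Icc (0:ℝ) 1) ∧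
      (∀ x ∈ closure (hT.seq γ), f x = 0) ∧ (∀ x, x ∉ hT.seq (Wsucc γ) → f x = 1) := by
    intro γ
    obtain ⟨g, h1, h2, h3, h4, _⟩ := hT.urysohn_ext (Wsucc γ)
      (isClosed_closure (s := hT.seq γ)) isClosed_empty
      (hT.mono γ (Wsucc γ) (lt_Wsucc γ)) (Set.disjoint_empty _)
    exact ⟨g, h1, h2, h3, h4⟩
  choose f hfc hf01 hf0 hf1 using hfam
  refine ⟨hT.normal_closure, typeI_completelyRegular hT, slicerFun hT f, ?_, ?_⟩
  · exact slicerFun_continuous hT f hf01 hf0 hf1 hcan hfc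
  · intro a x hx
    exact slicerFun_slices hT f hf01 hf0 hcan a x hx

end
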